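/- arXiv:2503.19297 — 5 statements merged into one kernel-verified Lean document; each statement's English description precedes it below -/
import Mathlib

section
/- Let n ≥ 2, H < 0, 0 < s∗ < ∞, and let (r, θ, α) be continuously differentiable on [0, s∗], solving the CMC profile ODE system on (0, s∗), with (r(0), θ(0), α(0)) = (r₀, π/4, −π/2) for some r₀ ∈ (0, π/2), taking values in (0, π/2) × [0, π/4) × (−π/2, 0] on (0, s∗), and satisfying ṙ(s) > 0, θ̇(s) < 0, α̇(s) > 0 for all s ∈ (0, s∗). Then lim_{s → s∗} θ(s) > 0; equivalently, θ(s∗) > 0. -/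
open Real Set

/-- The inverse cotangent, with values in `(0, π)`. -/
noncomputable def arccot (x : ℝ) : ℝ := Real.pi / 2 - Real.arctan x

/-- Right-hand side of the `α`-equation of the CMC profile ODE system:
`α̇ = (2n−2)·cot(2θ)·cos α / sin r − (2n−1)·cot r · sin α + H`. -/
noncomputable def alphaRHS (n : ℕ) (H rv θv αv : ℝ) : ℝ :=
  (2 * (n : ℝ) - 2) * (Real.cos (2 * θv) / Real.sin (2 * θv)) * Real.cos αv / Real.sin rv
    - (2 * (n : ℝ) - 1) * (Real.cos rv / Real.sin rv) * Real.sin αv + H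

/-- `(r, θ, α)` is a solution of the CMC profile ODE system on the set `I`:
the three functions are differentiable on `I`, `sin (r s) ≠ 0` and `sin (2 θ s) ≠ 0`
on `I`, and the equations `ṙ = cos α`, `θ̇ = sin α / sin r`,
`α̇ = (2n−2)·cot(2θ)·cos α / sin r − (2n−1)·cot r·sin α + H` hold at every `s ∈ I`. -/
def IsCMCSolutionOn (n : ℕ) (H : ℝ) (r θ α : ℝ → ℝ) (I : Set ℝ) : Prop :=
  ∀ s ∈ I,
    Real.sin (r s) ≠ 0 ∧ Real.sin (2 * θ s) ≠ 0 ∧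
    HasDerivWithinAt r (Real.cos (α s)) I s ∧
    HasDerivWithinAt θ (Real.sin (α s) / Real.sin (r s)) I s ∧
    HasDerivWithinAt α (alphaRHS n H (r s) (θ s) (α s)) I s

/-- If `(r, θ, α)` is a `C¹` solution on `[0, s∗]` of the CMC profile system (with `H < 0`)
on `(0, s∗)`, starting at `(r₀, π/4, −π/2)` with `r₀ ∈ (0, π/2)`, taking values in
`(0, π/2) × [0, π/4) × (−π/2, 0]` and with `ṙ > 0`, `θ̇ < 0`, `α̇ > 0` on `(0, s∗)`,
then `θ(s∗) > 0`. -/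
theorem theta_endpoint_pos (n : ℕ) (hn : 2 ≤ n) (H : ℝ) (hH : H < 0)
    (sStar r₀ : ℝ) (hsStar : 0 < sStar) (hr₀ : r₀ ∈ Ioo 0 (Real.pi / 2))
    (r θ α : ℝ → ℝ)
    (hC1r : ContDiffOn ℝ 1 r (Icc 0 sStar))
    (hC1θ : ContDiffOn ℝ 1 θ (Icc 0 sStar))
    (hC1α : ContDiffOn ℝ 1 α (Icc 0 sStar))
    (hsol : IsCMCSolutionOn n H r θ α (Ioo 0 sStar))
    (hr0 : r 0 = r₀) (hθ0 : θ 0 = Real.pi / 4) (hα0 : α 0 = -(Real.pi / 2))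
    (hval : ∀ s ∈ Ioo 0 sStar,
      r s ∈ Ioo 0 (Real.pi / 2) ∧ θ s ∈ Ico 0 (Real.pi / 4) ∧ α s ∈ Ioc (-(Real.pi / 2)) 0)
    (hrdot : ∀ s ∈ Ioo 0 sStar, 0 < derivWithin r (Icc 0 sStar) s)
    (hθdot : ∀ s ∈ Ioo 0 sStar, derivWithin θ (Icc 0 sStar) s < 0)
    (hαdot : ∀ s ∈ Ioo 0 sStar, 0 < derivWithin α (Icc 0 sStar) s) :
    0 < θ sStar := by

  have hIcc : UniqueDiffOn ℝ (Icc (0:ℝ) sStar) := uniqueDiffOn_Icc hsStar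
  have hsub : Ioo (0:ℝ) sStar ⊆ Icc 0 sStar := Ioo_subset_Icc_self
  -- θ is positive on the open interval
  have hθpos : ∀ s ∈ Ioo (0:ℝ) sStar, 0 < θ s := by
    intro s hs
    rcases (hval s hs).2.1 with ⟨h0, h1⟩
    rcases lt_or_eq_of_le h0 with h | h
    · exact h
    · exfalso; apply (hsol s hs).2.1; rw [← h]; simp
  -- derivWithin α on Icc equals the RHS at interior points
  have hαODE : ∀ s ∈ Ioo (0:ℝ) sStar,
      derivWithin α (Icc 0 sStar) s = alphaRHS n H (r s) (θ s) (α s) := by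
    intro s hs
    have h2 : HasDerivAt α (alphaRHS n H (r s) (θ s) (α s)) s :=
      ((hsol s hs).2.2.2.2).hasDerivAt (isOpen_Ioo.mem_nhds hs)
    exact h2.hasDerivWithinAt.derivWithin (hIcc s (hsub hs))
  have hIccNhds : ∀ s ∈ Ioo (0:ℝ) sStar, Icc (0:ℝ) sStar ∈ nhds s := fun s hs =>
    mem_nhds_iff.2 ⟨Ioo 0 sStar, hsub, isOpen_Ioo, hs⟩
  -- r and α are strictly monotone on [0, sStar]
  have hrmono : StrictMonoOn r (Icc 0 sStar) := by
    apply strictMonoOn_of_deriv_pos (convex_Icc 0 sStar) hC1r.continuousOn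
    intro x hx
    rw [interior_Icc] at hx
    have := hrdot x hx
    rwa [derivWithin_of_mem_nhds (hIccNhds x hx)] at this
  have hαmono : StrictMonoOn α (Icc 0 sStar) := by
    apply strictMonoOn_of_deriv_pos (convex_Icc 0 sStar) hC1α.continuousOn
    intro x hx
    rw [interior_Icc] at hx
    have := hαdot x hx
    rwa [derivWithin_of_mem_nhds (hIccNhds x hx)] at this
  -- bound on derivWithin α
  obtain ⟨M, hM⟩ := (isCompact_Icc).exists_bound_of_continuousOn
    (hC1α.continuousOn_derivWithin hIcc le_rfl)
  have hM0 : 0 ≤ M := le_trans (norm_nonneg _) (hM 0 ⟨le_rfl, hsStar.le⟩)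
  have hMle : ∀ s ∈ Ioo (0:ℝ) sStar, derivWithin α (Icc 0 sStar) s ≤ M := fun s hs =>
    le_trans (le_abs_self _) (hM s (hsub hs))
  -- θ sStar ≥ 0 by continuity
  have hne : (nhdsWithin sStar (Ioo 0 sStar)).NeBot := right_nhdsWithin_Ioo_neBot hsStar
  have hθtend : Filter.Tendsto θ (nhdsWithin sStar (Ioo 0 sStar)) (nhds (θ sStar)) :=
    ((hC1θ.continuousOn sStar ⟨hsStar.le, le_rfl⟩).mono hsub).tendsto
  have hθge : 0 ≤ θ sStar :=
    ge_of_tendsto hθtend (Filter.eventually_iff_exists_mem.2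
      ⟨Ioo 0 sStar, self_mem_nhdsWithin, fun s hs => (hθpos s hs).le⟩)
  by_contra hcon
  push_neg at hcon
  have hθ0' : θ sStar = 0 := le_antisymm hcon hθge
  -- midpoint
  set s₁ : ℝ := sStar / 2 with hs₁def
  have hs₁ : s₁ ∈ Ioo (0:ℝ) sStar := ⟨by positivity, by linarith⟩
  have hα₁ : -(Real.pi/2) < α s₁ := by
    have := hαmono (left_mem_Icc.2 hsStar.le) (hsub hs₁) hs₁.1
    rwa [hα0] at this
  have hα₁le : α s₁ ≤ 0 := (hval s₁ hs₁).2.2.2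
  have hc : 0 < Real.cos (α s₁) := by
    apply Real.cos_pos_of_mem_Ioo
    constructor
    · exact hα₁
    · linarith [Real.pi_pos]
  have hr₁ : r s₁ ∈ Ioo (0:ℝ) (Real.pi/2) := (hval s₁ hs₁).1
  have ha : 0 < Real.sin (r s₁) := Real.sin_pos_of_pos_of_lt_pi hr₁.1
    (by linarith [Real.pi_pos, hr₁.2])
  set c := Real.cos (α s₁) with hcdef
  have hN : (2:ℝ) ≤ 2 * (n : ℝ) - 2 := by
    have : (2:ℝ) ≤ (n:ℝ) := by exact_mod_cast hn
    linarith
  -- choose δ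
  set δ : ℝ := min (1/2) ((2 * (n : ℝ) - 2) * c / (4 * (M + 1 - H))) with hδdef
  have hden : 0 < M + 1 - H := by linarith
  have hδpos : 0 < δ := lt_min (by norm_num) (by positivity)
  -- find s₂ ∈ (s₁, sStar) with θ s₂ < δ
  have hne2 : (nhdsWithin sStar (Ioo s₁ sStar)).NeBot := right_nhdsWithin_Ioo_neBot hs₁.2
  have hsub2 : Ioo s₁ sStar ⊆ Icc 0 sStar := fun x hx => ⟨le_of_lt (lt_trans hs₁.1 hx.1), hx.2.le⟩
  have hθtend2 : Filter.Tendsto θ (nhdsWithin sStar (Ioo s₁ sStar)) (nhds 0) := by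
    rw [← hθ0']
    exact ((hC1θ.continuousOn sStar ⟨hsStar.le, le_rfl⟩).mono hsub2).tendsto
  have hev : ∀ᶠ s in nhdsWithin sStar (Ioo s₁ sStar), θ s < δ :=
    hθtend2.eventually (Filter.tendsto_id.eventually_lt_const hδpos)
  obtain ⟨s₂, hs₂mem, hθs₂⟩ :=
    (hev.and eventually_mem_nhdsWithin).exists

  have hs₂' : s₂ ∈ Ioo (0:ℝ) sStar := ⟨lt_trans hs₁.1 hθs₂.1, hθs₂.2⟩
  have ht0 : 0 < θ s₂ := hθpos s₂ hs₂'
  have ht12 : θ s₂ < 1/2 := lt_of_lt_of_le hs₂mem (min_le_left _ _)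
  have htb : θ s₂ < (2 * (n : ℝ) - 2) * c / (4 * (M + 1 - H)) :=
    lt_of_lt_of_le hs₂mem (min_le_right _ _)
  have hpi3 := Real.pi_gt_three
  have hsin2θpos : 0 < Real.sin (2 * θ s₂) :=
    Real.sin_pos_of_pos_of_lt_pi (by linarith) (by linarith)
  have hsin2θle : Real.sin (2 * θ s₂) ≤ 2 * θ s₂ := (Real.sin_lt (by linarith)).le
  have hsinθ : Real.sin (θ s₂) ≤ θ s₂ := (Real.sin_lt ht0).le
  have hsinθ0 : 0 ≤ Real.sin (θ s₂) :=
    (Real.sin_pos_of_pos_of_lt_pi ht0 (by linarith)).le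
  have hcos2θ : 1/2 ≤ Real.cos (2 * θ s₂) := by
    have h := Real.cos_sq' (θ s₂)
    have h2 := Real.cos_two_mul (θ s₂)
    nlinarith
  have hαs₂ := (hval s₂ hs₂').2.2
  have hrs₂ := (hval s₂ hs₂').1
  have hα₁₂ : α s₁ ≤ α s₂ := (hαmono (hsub hs₁) (hsub hs₂') hθs₂.1).le
  have hcosα : c ≤ Real.cos (α s₂) := by
    have := Real.cos_le_cos_of_nonneg_of_le_pi (x := -(α s₂)) (y := -(α s₁))
      (by linarith [hαs₂.2]) (by linarith) (by linarith)
    rwa [Real.cos_neg, Real.cos_neg] at this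
  have hsinr0 : 0 < Real.sin (r s₂) :=
    Real.sin_pos_of_pos_of_lt_pi hrs₂.1 (by linarith [hrs₂.2])
  have hsinr1 : Real.sin (r s₂) ≤ 1 := Real.sin_le_one _
  have hcosr : 0 ≤ Real.cos (r s₂) :=
    Real.cos_nonneg_of_mem_Icc ⟨by linarith [hrs₂.1], hrs₂.2.le⟩
  have hsinα : Real.sin (α s₂) ≤ 0 :=
    Real.sin_nonpos_of_nonpos_of_neg_pi_le hαs₂.2 (by linarith [hαs₂.1])
  have hle := hMle s₂ hs₂'
  rw [hαODE s₂ hs₂'] at hle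
  unfold alphaRHS at hle
  -- second term of the RHS is nonpositive
  have hT2 : (2 * (n : ℝ) - 1) * (Real.cos (r s₂) / Real.sin (r s₂)) * Real.sin (α s₂) ≤ 0 := by
    have h1 : 0 ≤ Real.cos (r s₂) / Real.sin (r s₂) := div_nonneg hcosr hsinr0.le
    have h2 : (0:ℝ) ≤ 2 * (n : ℝ) - 1 := by linarith
    exact mul_nonpos_of_nonneg_of_nonpos (mul_nonneg h2 h1) hsinα
  -- first term is large
  have hq0 : (0:ℝ) ≤ (1/2) / (2 * θ s₂) := by positivity
  have hstep1 : (1/2) / (2 * θ s₂) ≤ Real.cos (2 * θ s₂) / Real.sin (2 * θ s₂) :=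
    div_le_div₀ (by linarith) hcos2θ hsin2θpos hsin2θle
  have hA0 : 0 ≤ (2 * (n : ℝ) - 2) * (Real.cos (2 * θ s₂) / Real.sin (2 * θ s₂)) *
      Real.cos (α s₂) := by
    have : 0 ≤ Real.cos (2 * θ s₂) / Real.sin (2 * θ s₂) := le_trans hq0 hstep1
    have : 0 ≤ Real.cos (α s₂) := le_trans hc.le hcosα
    positivity
  have hstep2 : (2 * (n : ℝ) - 2) * ((1/2) / (2 * θ s₂)) * c ≤
      (2 * (n : ℝ) - 2) * (Real.cos (2 * θ s₂) / Real.sin (2 * θ s₂)) * Real.cos (α s₂) := by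
    apply mul_le_mul _ hcosα hc.le
    · apply mul_nonneg (by linarith) (le_trans hq0 hstep1)
    · exact mul_le_mul_of_nonneg_left hstep1 (by linarith)
  have hstep3 : (2 * (n : ℝ) - 2) * (Real.cos (2 * θ s₂) / Real.sin (2 * θ s₂)) *
        Real.cos (α s₂) ≤
      (2 * (n : ℝ) - 2) * (Real.cos (2 * θ s₂) / Real.sin (2 * θ s₂)) *
        Real.cos (α s₂) / Real.sin (r s₂) :=
    le_div_self hA0 hsinr0 hsinr1
  have heq : (2 * (n : ℝ) - 2) * ((1/2) / (2 * θ s₂)) * c =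
      (2 * (n : ℝ) - 2) * c / (4 * θ s₂) := by
    field_simp; ring
  have hgt : M + 1 - H < (2 * (n : ℝ) - 2) * c / (4 * θ s₂) := by
    rw [lt_div_iff₀ (by positivity)]
    have h := (lt_div_iff₀ (by positivity : (0:ℝ) < 4 * (M + 1 - H))).1 htb
    linarith only [h]
  rw [heq] at hstep2
  linarith only [hstep2, hstep3, hgt, hT2, hle, hH]
end

section
/- Let n ≥ 2, H < 0, and let (r, θ, α) be a monotone maximal solution on (0, s∗) of the CMC profile ODE system with initial value r₀. If there exists s₀ ∈ (0, s∗) such that (2n−2)·cot(2θ(s₀))·cos(α(s₀)) + H ≥ 0, then α̇(s∗) > 0. -/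
open Real Set Filter Topology

/-- A monotone (right-)maximal solution of the CMC profile ODE system on `(0, s∗)`
with initial value `r₀ ∈ (0, arccot((−H)/(2n−1)))`: a triple `(r, θ, α)` of `C¹`
functions on `[0, s∗]`, `0 < s∗ < ∞`, solving the system on `(0, s∗)`, with
`(r, θ, α)(0) = (r₀, π/4, −π/2)`, values in `(0, π/2) × (0, π/4) × (−π/2, 0)` on
`(0, s∗)`, `α̇ > 0` on `(0, s∗)`, `θ(s∗) > 0`, and at the endpoint
`r(s∗) = π/2` or `α(s∗) = 0` or `α̇(s∗) = 0`. -/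
structure IsMonotoneMaximalSolution (n : ℕ) (H : ℝ) (r θ α : ℝ → ℝ) (r₀ sStar : ℝ) : Prop where
  hsStar : 0 < sStar
  hr₀ : r₀ ∈ Ioo 0 (arccot (-H / (2 * (n : ℝ) - 1)))
  hC1r : ContDiffOn ℝ 1 r (Icc 0 sStar)
  hC1θ : ContDiffOn ℝ 1 θ (Icc 0 sStar)
  hC1α : ContDiffOn ℝ 1 α (Icc 0 sStar)
  hsol : IsCMCSolutionOn n H r θ α (Ioo 0 sStar)
  hr0 : r 0 = r₀
  hθ0 : θ 0 = Real.pi / 4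
  hα0 : α 0 = -(Real.pi / 2)
  hval : ∀ s ∈ Ioo 0 sStar,
    r s ∈ Ioo 0 (Real.pi / 2) ∧ θ s ∈ Ioo 0 (Real.pi / 4) ∧ α s ∈ Ioo (-(Real.pi / 2)) 0
  hαdot : ∀ s ∈ Ioo 0 sStar, 0 < derivWithin α (Icc 0 sStar) s
  hθend : 0 < θ sStar
  hend : r sStar = Real.pi / 2 ∨ α sStar = 0 ∨ derivWithin α (Icc 0 sStar) sStar = 0

private lemma cot_lt_cot' {x y : ℝ} (hx : 0 < x) (hxy : x < y) (hy : y < Real.pi) :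
    Real.cos y / Real.sin y < Real.cos x / Real.sin x := by
  have hsx : 0 < Real.sin x := Real.sin_pos_of_pos_of_lt_pi hx (hxy.trans hy)
  have hsy : 0 < Real.sin y := Real.sin_pos_of_pos_of_lt_pi (hx.trans hxy) hy
  rw [div_lt_div_iff₀ hsy hsx]
  have h : 0 < Real.sin (y - x) :=
    Real.sin_pos_of_pos_of_lt_pi (by linarith) (by linarith)
  rw [Real.sin_sub] at h
  nlinarith

set_option maxHeartbeats 1600000 in
/-- If `(2n−2)·cot(2θ(s₀))·cos(α(s₀)) + H ≥ 0` at some `s₀ ∈ (0, s∗)`, then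
`α̇(s∗) > 0`. -/
theorem alpha_deriv_endpoint_pos (n : ℕ) (hn : 2 ≤ n) (H : ℝ) (hH : H < 0)
    (r θ α : ℝ → ℝ) (r₀ sStar : ℝ)
    (hsol : IsMonotoneMaximalSolution n H r θ α r₀ sStar)
    (s₀ : ℝ) (hs₀ : s₀ ∈ Ioo 0 sStar)
    (hineq : 0 ≤ (2 * (n : ℝ) - 2) * (Real.cos (2 * θ s₀) / Real.sin (2 * θ s₀))
      * Real.cos (α s₀) + H) :
    0 < derivWithin α (Icc 0 sStar) sStar := by
  obtain ⟨hsS, _, hC1r, hC1θ, hC1α, hode, hr0, hθ0, hα0, hval, hαdot, hθend, hend⟩ := hsol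
  have hud : UniqueDiffOn ℝ (Icc (0:ℝ) sStar) := uniqueDiffOn_Icc hsS
  have hsub : Ioo (0:ℝ) sStar ⊆ Icc 0 sStar := Ioo_subset_Icc_self
  have hsSmem : sStar ∈ Icc (0:ℝ) sStar := right_mem_Icc.mpr hsS.le
  have hpi := Real.pi_pos
  have hn' : (2:ℝ) ≤ (n:ℝ) := by exact_mod_cast hn
  -- pointwise derivative facts on the open interval
  have hderiv : ∀ x ∈ Ioo (0:ℝ) sStar,
      deriv r x = Real.cos (α x) ∧ deriv θ x = Real.sin (α x) / Real.sin (r x) ∧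
      deriv α x = alphaRHS n H (r x) (θ x) (α x) ∧
      derivWithin α (Icc 0 sStar) x = alphaRHS n H (r x) (θ x) (α x) := by
    intro x hx
    obtain ⟨h1, h2, hdr, hdθ, hdα⟩ := hode x hx
    have hnx : Ioo (0:ℝ) sStar ∈ 𝓝 x := isOpen_Ioo.mem_nhds hx
    exact ⟨(hdr.hasDerivAt hnx).deriv, (hdθ.hasDerivAt hnx).deriv,
      (hdα.hasDerivAt hnx).deriv, (hdα.hasDerivAt hnx).hasDerivWithinAt.derivWithin (hud x (hsub hx))⟩
  -- strict monotonicity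
  have hrmono : StrictMonoOn r (Icc 0 sStar) := by
    apply strictMonoOn_of_deriv_pos (convex_Icc _ _) hC1r.continuousOn
    intro x hx
    rw [interior_Icc] at hx
    rw [(hderiv x hx).1]
    have hαx := (hval x hx).2.2
    exact Real.cos_pos_of_mem_Ioo ⟨hαx.1, hαx.2.trans (by linarith)⟩
  have hθanti : StrictAntiOn θ (Icc 0 sStar) := by
    apply strictAntiOn_of_deriv_neg (convex_Icc _ _) hC1θ.continuousOn
    intro x hx
    rw [interior_Icc] at hx
    rw [(hderiv x hx).2.1]
    obtain ⟨hrx, hθx, hαx⟩ := hval x hx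
    exact div_neg_of_neg_of_pos
      (Real.sin_neg_of_neg_of_neg_pi_lt hαx.2 (by linarith [hαx.1]))
      (Real.sin_pos_of_pos_of_lt_pi hrx.1 (by linarith [hrx.2]))
  have hαmono : StrictMonoOn α (Icc 0 sStar) := by
    apply strictMonoOn_of_deriv_pos (convex_Icc _ _) hC1α.continuousOn
    intro x hx
    rw [interior_Icc] at hx
    have h := hαdot x hx
    rw [(hderiv x hx).2.2.2] at h
    rw [(hderiv x hx).2.2.1]
    exact h
  -- values at s₀
  obtain ⟨hr₀v, hθ₀v, hα₀v⟩ := hval s₀ hs₀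
  have hs₀I : s₀ ∈ Icc (0:ℝ) sStar := hsub hs₀
  -- strict inequalities between s₀ and sStar
  have hrlt : r s₀ < r sStar := hrmono hs₀I hsSmem hs₀.2
  have hθlt : θ sStar < θ s₀ := hθanti hs₀I hsSmem hs₀.2
  have hαlt : α s₀ < α sStar := hαmono hs₀I hsSmem hs₀.2
  -- limits along T := Ioo s₀ sStar
  set T : Set ℝ := Ioo s₀ sStar with hT
  have hTsub : T ⊆ Icc 0 sStar := fun x hx => hsub ⟨hs₀.1.trans hx.1, hx.2⟩
  have hTsub' : T ⊆ Ioo 0 sStar := fun x hx => ⟨hs₀.1.trans hx.1, hx.2⟩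
  haveI hNB : (𝓝[T] sStar).NeBot := by
    apply mem_closure_iff_nhdsWithin_neBot.mp
    rw [hT, closure_Ioo hs₀.2.ne]
    exact ⟨hs₀.2.le, le_rfl⟩
  have hmemT : ∀ᶠ x in 𝓝[T] sStar, x ∈ T := eventually_mem_nhdsWithin
  have hcr : ContinuousWithinAt r T sStar := ((hC1r.continuousOn sStar hsSmem).mono hTsub)
  have hcθ : ContinuousWithinAt θ T sStar := ((hC1θ.continuousOn sStar hsSmem).mono hTsub)
  have hcα : ContinuousWithinAt α T sStar := ((hC1α.continuousOn sStar hsSmem).mono hTsub)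
  -- endpoint bounds via limits
  have hαle : α sStar ≤ 0 :=
    le_of_tendsto hcα (hmemT.mono fun x hx => (hval x (hTsub' hx)).2.2.2.le)
  have hrle : r sStar ≤ Real.pi / 2 :=
    le_of_tendsto hcr (hmemT.mono fun x hx => (hval x (hTsub' hx)).1.2.le)
  -- basic positivity facts at sStar
  have hrSpos : 0 < r sStar := hr₀v.1.trans hrlt
  have hsinrS : 0 < Real.sin (r sStar) :=
    Real.sin_pos_of_pos_of_lt_pi hrSpos (by linarith)
  have hθSlt : θ sStar < Real.pi / 4 := hθlt.trans hθ₀v.2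
  have hsin2θS : 0 < Real.sin (2 * θ sStar) :=
    Real.sin_pos_of_pos_of_lt_pi (by linarith) (by linarith)
  have hαSgt : -(Real.pi / 2) < α sStar := hα₀v.1.trans hαlt
  -- derivWithin at sStar equals alphaRHS at sStar
  have hgcont : ContinuousWithinAt (derivWithin α (Icc 0 sStar)) T sStar :=
    ((hC1α.continuousOn_derivWithin hud le_rfl) sStar hsSmem).mono hTsub
  have hfc : ContinuousWithinAt (fun s => alphaRHS n H (r s) (θ s) (α s)) T sStar := by
    have h2θ : ContinuousWithinAt (fun s => 2 * θ s) T sStar := hcθ.const_mul 2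
    have hc2 : ContinuousWithinAt (fun s => Real.cos (2 * θ s)) T sStar :=
      Real.continuous_cos.continuousAt.comp_continuousWithinAt h2θ
    have hs2 : ContinuousWithinAt (fun s => Real.sin (2 * θ s)) T sStar :=
      Real.continuous_sin.continuousAt.comp_continuousWithinAt h2θ
    have hcosα : ContinuousWithinAt (fun s => Real.cos (α s)) T sStar :=
      Real.continuous_cos.continuousAt.comp_continuousWithinAt hcα
    have hsinα : ContinuousWithinAt (fun s => Real.sin (α s)) T sStar :=
      Real.continuous_sin.continuousAt.comp_continuousWithinAt hcα
    have hcosr : ContinuousWithinAt (fun s => Real.cos (r s)) T sStar :=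
      Real.continuous_cos.continuousAt.comp_continuousWithinAt hcr
    have hsinr : ContinuousWithinAt (fun s => Real.sin (r s)) T sStar :=
      Real.continuous_sin.continuousAt.comp_continuousWithinAt hcr
    exact ((((continuousWithinAt_const.mul (hc2.div hs2 hsin2θS.ne')).mul hcosα).div
      hsinr hsinrS.ne').sub ((continuousWithinAt_const.mul
      (hcosr.div hsinr hsinrS.ne')).mul hsinα)).add continuousWithinAt_const
  have hkey : derivWithin α (Icc 0 sStar) sStar = alphaRHS n H (r sStar) (θ sStar) (α sStar) := by
    refine tendsto_nhds_unique ?_ hfc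
    refine hgcont.congr' ?_
    filter_upwards [hmemT] with x hx
    exact (hderiv x (hTsub' hx)).2.2.2
  rw [hkey]
  -- final inequality
  have hcosα₀ : 0 < Real.cos (α s₀) :=
    Real.cos_pos_of_mem_Ioo ⟨hα₀v.1, hα₀v.2.trans (by linarith)⟩
  have hcotθ₀ : 0 < Real.cos (2 * θ s₀) / Real.sin (2 * θ s₀) := by
    by_contra hcon
    push_neg at hcon
    nlinarith [hineq, mul_nonneg (mul_nonneg (show (0:ℝ) ≤ 2*(n:ℝ)-2 by linarith)
      (neg_nonneg.mpr hcon)) hcosα₀.le]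
  have hcotlt : Real.cos (2 * θ s₀) / Real.sin (2 * θ s₀)
      < Real.cos (2 * θ sStar) / Real.sin (2 * θ sStar) :=
    cot_lt_cot' (by linarith) (by linarith) (by linarith [hθ₀v.2])
  have hcoslt : Real.cos (α s₀) < Real.cos (α sStar) := by
    have := Real.cos_lt_cos_of_nonneg_of_le_pi (x := -α sStar) (y := -α s₀)
      (by linarith) (by linarith [hα₀v.1]) (by linarith)
    rwa [Real.cos_neg, Real.cos_neg] at this
  have hXlt : Real.cos (2 * θ s₀) / Real.sin (2 * θ s₀) * Real.cos (α s₀)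
      < Real.cos (2 * θ sStar) / Real.sin (2 * θ sStar) * Real.cos (α sStar) :=
    mul_lt_mul'' hcotlt hcoslt hcotθ₀.le hcosα₀.le
  set cS : ℝ := Real.cos (2 * θ sStar) / Real.sin (2 * θ sStar) * Real.cos (α sStar) with hcS
  have hcSpos : 0 < cS := lt_trans (mul_pos hcotθ₀ hcosα₀) hXlt
  have hT1 : -H < (2 * (n:ℝ) - 2) * cS := by
    nlinarith [hineq, mul_pos (show (0:ℝ) < 2*(n:ℝ)-2 by linarith) (sub_pos.mpr hXlt)]
  have hT1div : (2 * (n:ℝ) - 2) * cS ≤ (2 * (n:ℝ) - 2) * cS / Real.sin (r sStar) := by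
    rw [le_div_iff₀ hsinrS]
    nlinarith [mul_nonneg (mul_nonneg (show (0:ℝ) ≤ 2*(n:ℝ)-2 by linarith) hcSpos.le)
      (sub_nonneg.mpr (Real.sin_le_one (r sStar)))]
  have hT2 : (2 * (n:ℝ) - 1) * (Real.cos (r sStar) / Real.sin (r sStar)) * Real.sin (α sStar) ≤ 0 := by
    have hcosr : 0 ≤ Real.cos (r sStar) :=
      Real.cos_nonneg_of_mem_Icc ⟨by linarith, hrle⟩
    have hsinα : Real.sin (α sStar) ≤ 0 :=
      Real.sin_nonpos_of_nonpos_of_neg_pi_le hαle (by linarith)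
    have h1 : 0 ≤ (2 * (n:ℝ) - 1) * (Real.cos (r sStar) / Real.sin (r sStar)) :=
      mul_nonneg (by linarith) (div_nonneg hcosr hsinrS.le)
    exact mul_nonpos_of_nonneg_of_nonpos h1 hsinα
  have : alphaRHS n H (r sStar) (θ sStar) (α sStar)
      = (2 * (n:ℝ) - 2) * cS / Real.sin (r sStar)
        - (2 * (n:ℝ) - 1) * (Real.cos (r sStar) / Real.sin (r sStar)) * Real.sin (α sStar) + H := by
    rw [alphaRHS, hcS]; ring_nf
  rw [this]
  linarith
end

section
/- Let n ≥ 2, H < 0, and let (r, θ, α) be a monotone maximal solution on (0, s∗) of the CMC profile ODE system with initial value r₀. Then s∗ < 3√2·π/4. -/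
/-!
Along a monotone solution `α ∈ (-π/2, 0)` and `0 < sin r ≤ 1`, so
`d/ds (r - θ) = cos α - sin α / sin r ≥ cos α - sin α = |cos α| + |sin α| ≥ 1`.
Hence `s∗ ≤ (r - θ)(s∗) - (r - θ)(0) < π/2 + π/4`, because `r(s∗) ≤ π/2`, `θ(s∗) > 0`,
`r(0) > 0` and `θ(0) = π/4`.
-/

open Real Set

lemma one_le_cos_sub_sin {a : ℝ} (hcos : 0 ≤ cos a) (hsin : sin a ≤ 0) : 1 ≤ cos a - sin a := by
  nlinarith [sin_sq_add_cos_sq a, cos_le_one a, neg_one_le_sin a]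

lemma one_le_cos_sub_sin_div {a x : ℝ} (hcos : 0 ≤ cos a) (hsin : sin a ≤ 0) (hx₀ : 0 < x)
    (hx₁ : x ≤ 1) : 1 ≤ cos a - sin a / x := by
  have hdiv : sin a / x ≤ sin a := by
    have := le_div_self (neg_nonneg.2 hsin) hx₀ hx₁
    rw [neg_div] at this
    linarith
  linarith [one_le_cos_sub_sin hcos hsin]

lemma mul_sub_le_image_sub_of_le_hasDerivAt {f f' : ℝ → ℝ} {a b C : ℝ} (hab : a < b)
    (hf : ContinuousOn f (Icc a b)) (hff' : ∀ x ∈ Ioo a b, HasDerivAt f (f' x) x)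
    (hf' : ∀ x ∈ Ioo a b, C ≤ f' x) : C * (b - a) ≤ f b - f a := by
  obtain ⟨c, hc, hslope⟩ := exists_hasDerivAt_eq_slope f f' hab hf hff'
  have := hf' c hc
  rwa [hslope, le_div_iff₀ (sub_pos.2 hab)] at this

lemma IsCMCSolutionOn.hasDerivAt_sub {n : ℕ} {H : ℝ} {r θ α : ℝ → ℝ} {I : Set ℝ} {s : ℝ}
    (h : IsCMCSolutionOn n H r θ α I) (hI : IsOpen I) (hs : s ∈ I) :
    HasDerivAt (fun t ↦ r t - θ t) (cos (α s) - sin (α s) / sin (r s)) s := by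
  obtain ⟨-, -, hr, hθ, -⟩ := h s hs
  exact (hr.hasDerivAt (hI.mem_nhds hs)).sub (hθ.hasDerivAt (hI.mem_nhds hs))

namespace IsMonotoneMaximalSolution

variable {n : ℕ} {H : ℝ} {r θ α : ℝ → ℝ} {r₀ sStar : ℝ}
  (h : IsMonotoneMaximalSolution n H r θ α r₀ sStar)
include h

lemma one_le_cos_sub_sin_div_sin {s : ℝ} (hs : s ∈ Ioo 0 sStar) :
    1 ≤ cos (α s) - sin (α s) / sin (r s) := by
  obtain ⟨hr, -, hα⟩ := h.hval s hs
  apply one_le_cos_sub_sin_div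
  · exact cos_nonneg_of_mem_Icc ⟨hα.1.le, by linarith [pi_pos, hα.2]⟩
  · exact (sin_neg_of_neg_of_neg_pi_lt hα.2 (by linarith [pi_pos, hα.1])).le
  · exact sin_pos_of_pos_of_lt_pi hr.1 (by linarith [pi_pos, hr.2])
  · exact sin_le_one _

lemma sStar_le : sStar ≤ (r sStar - θ sStar) - (r₀ - π / 4) := by
  have := mul_sub_le_image_sub_of_le_hasDerivAt (f := fun t ↦ r t - θ t) h.hsStar
    (h.hC1r.continuousOn.sub h.hC1θ.continuousOn)
    (fun s hs ↦ h.hsol.hasDerivAt_sub isOpen_Ioo hs) (fun s hs ↦ h.one_le_cos_sub_sin_div_sin hs)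
  rw [h.hr0, h.hθ0] at this
  linarith

lemma r_sStar_le : r sStar ≤ π / 2 := by
  have hclosure : sStar ∈ closure (Ioo 0 sStar) := by
    rw [closure_Ioo h.hsStar.ne]
    exact right_mem_Icc.2 h.hsStar.le
  exact ContinuousWithinAt.closure_le hclosure
    ((h.hC1r.continuousOn sStar (right_mem_Icc.2 h.hsStar.le)).mono Ioo_subset_Icc_self)
    continuousWithinAt_const fun s hs ↦ (h.hval s hs).1.2.le

lemma sStar_lt_three_pi_div_four : sStar < 3 * π / 4 := by
  linarith [h.sStar_le, h.r_sStar_le, h.hθend, h.hr₀.1]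

end IsMonotoneMaximalSolution

theorem sStar_lt_general (n : ℕ) (H : ℝ)
    (r θ α : ℝ → ℝ) (r₀ sStar : ℝ)
    (hsol : IsMonotoneMaximalSolution n H r θ α r₀ sStar) :
    sStar < 3 * Real.sqrt 2 * Real.pi / 4 := by
  calc sStar < 3 * π / 4 := hsol.sStar_lt_three_pi_div_four
    _ < 3 * Real.sqrt 2 * π / 4 := by nlinarith [pi_pos, one_lt_sqrt_two]

/-- The right endpoint of a monotone maximal solution satisfies `s∗ < 3√2·π/4`. -/
theorem sStar_lt (n : ℕ) (hn : 2 ≤ n) (H : ℝ) (hH : H < 0)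
    (r θ α : ℝ → ℝ) (r₀ sStar : ℝ)
    (hsol : IsMonotoneMaximalSolution n H r θ α r₀ sStar) :
    sStar < 3 * Real.sqrt 2 * Real.pi / 4 :=
  sStar_lt_general n H r θ α r₀ sStar hsol
end

section
/- Let n ≥ 2, H < 0, and let (r, θ, α) be a monotone maximal solution on (0, s∗) of the CMC profile ODE system with initial value r₀. If there exists s₀ ∈ (0, s∗) with α(s₀) = −π/4, then s₀ < √2·π/4. -/
open Real Set

/-- If `α(s₀) = −π/4` for some `s₀ ∈ (0, s∗)`, then `s₀ < √2·π/4`. -/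
theorem time_alpha_reaches (n : ℕ) (hn : 2 ≤ n) (H : ℝ) (hH : H < 0)
    (r θ α : ℝ → ℝ) (r₀ sStar : ℝ)
    (hsol : IsMonotoneMaximalSolution n H r θ α r₀ sStar)
    (s₀ : ℝ) (hs₀ : s₀ ∈ Ioo 0 sStar) (hα : α s₀ = -(Real.pi / 4)) :
    s₀ < Real.sqrt 2 * Real.pi / 4 := by
  obtain ⟨hs₀pos, hs₀lt⟩ := hs₀
  have hintIcc : interior (Icc (0:ℝ) sStar) = Ioo 0 sStar := interior_Icc
  -- α is strictly monotone on [0, sStar]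
  have hαmono : StrictMonoOn α (Icc 0 sStar) := by
    apply strictMonoOn_of_hasDerivWithinAt_pos (f' := fun x => alphaRHS n H (r x) (θ x) (α x))
      (convex_Icc _ _) hsol.hC1α.continuousOn
    · intro x hx
      rw [hintIcc] at hx ⊢
      exact (hsol.hsol x hx).2.2.2.2
    · intro x hx
      rw [hintIcc] at hx
      have hd : HasDerivAt α (alphaRHS n H (r x) (θ x) (α x)) x :=
        (hsol.hsol x hx).2.2.2.2.hasDerivAt (Ioo_mem_nhds hx.1 hx.2)
      have := hsol.hαdot x hx
      rwa [hd.hasDerivWithinAt.derivWithin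
        ((uniqueDiffOn_Icc hsol.hsStar) x ⟨hx.1.le, hx.2.le⟩)] at this
  -- key derivative bound on (0, s₀)
  have key : ∀ x ∈ Ioo (0:ℝ) s₀,
      Real.sin (α x) / Real.sin (r x) + Real.sqrt 2 / 2 ≤ 0 := by
    intro x hx
    have hxS : x ∈ Ioo 0 sStar := ⟨hx.1, hx.2.trans hs₀lt⟩
    obtain ⟨hrx, hθx, hαx⟩ := hsol.hval x hxS
    have hrpos : 0 < Real.sin (r x) :=
      Real.sin_pos_of_pos_of_lt_pi hrx.1 (hrx.2.trans (by linarith [Real.pi_pos]))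
    have hrle : Real.sin (r x) ≤ 1 := Real.sin_le_one _
    have hαle : α x ≤ -(Real.pi / 4) := by
      rw [← hα]
      exact le_of_lt (hαmono ⟨hxS.1.le, hxS.2.le⟩ ⟨hs₀pos.le, hs₀lt.le⟩ hx.2)
    have hsinle : Real.sin (α x) ≤ -(Real.sqrt 2 / 2) := by
      have h1 : Real.sin (α x) ≤ Real.sin (-(Real.pi / 4)) := by
        apply Real.strictMonoOn_sin.monotoneOn
        · constructor <;> [linarith [hαx.1]; linarith [hαx.2, Real.pi_pos]]
        · constructor <;> [linarith [Real.pi_pos]; linarith [Real.pi_pos]]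
        · exact hαle
      rwa [Real.sin_neg, Real.sin_pi_div_four] at h1
    rw [div_add' _ _ _ hrpos.ne', div_nonpos_iff]
    right
    constructor
    · nlinarith [Real.sqrt_nonneg 2]
    · exact hrpos.le
  -- the function θ(s) + √2/2 s is antitone on [0, s₀]
  have hanti : AntitoneOn (fun s => θ s + Real.sqrt 2 / 2 * s) (Icc 0 s₀) := by
    apply antitoneOn_of_hasDerivWithinAt_nonpos
      (f' := fun x => Real.sin (α x) / Real.sin (r x) + Real.sqrt 2 / 2) (convex_Icc _ _)
    · exact (hsol.hC1θ.continuousOn.mono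
        (Icc_subset_Icc le_rfl hs₀lt.le)).add (continuous_const.mul continuous_id).continuousOn
    · intro x hx
      rw [interior_Icc] at hx ⊢
      have hxS : x ∈ Ioo 0 sStar := ⟨hx.1, hx.2.trans hs₀lt⟩
      have hdθ : HasDerivAt θ (Real.sin (α x) / Real.sin (r x)) x :=
        (hsol.hsol x hxS).2.2.2.1.hasDerivAt (Ioo_mem_nhds hxS.1 hxS.2)
      exact ((hdθ.add ((hasDerivAt_id x).const_mul (Real.sqrt 2 / 2))).hasDerivWithinAt).congr_deriv
        (by ring)
    · intro x hx
      rw [interior_Icc] at hx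
      exact key x hx
  have h0 : (0:ℝ) ∈ Icc (0:ℝ) s₀ := ⟨le_rfl, hs₀pos.le⟩
  have hs₀mem : s₀ ∈ Icc (0:ℝ) s₀ := ⟨hs₀pos.le, le_rfl⟩
  have hineq := hanti h0 hs₀mem hs₀pos.le
  simp only [mul_zero, add_zero] at hineq
  rw [hsol.hθ0] at hineq
  have hθs₀ : 0 < θ s₀ := (hsol.hval s₀ ⟨hs₀pos, hs₀lt⟩).2.1.1
  have hsq : Real.sqrt 2 * Real.sqrt 2 = 2 := Real.mul_self_sqrt (by norm_num)
  have h2 : (0:ℝ) < Real.sqrt 2 := Real.sqrt_pos.mpr (by norm_num)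
  nlinarith [Real.pi_pos]
end

section
/- Let n ≥ 2, H < 0, and let (r, θ, α) be a monotone maximal solution on (0, s∗) of the CMC profile ODE system with initial value r₀, and suppose α̇(s∗) = 0. If 3√2·H·(1 − 1/sin r₀) < 1 and √2·(n−1)·tan( (2/(2n−1))·( π/4 − H·(1 − 1/sin r₀)·(3√2·π/4) ) ) + H ≥ 0, then α(s) < −π/4 for all s ∈ (0, s∗]. -/
open Real Set

set_option maxHeartbeats 4000000 in
/-- If `α̇(s∗) = 0`, `3√2·H·(1 − 1/sin r₀) < 1` and
`√2·(n−1)·tan((2/(2n−1))·(π/4 − H·(1 − 1/sin r₀)·(3√2·π/4))) + H ≥ 0`, then `α < −π/4`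
on `(0, s∗]`. -/
theorem alpha_lt_neg_pi_div_four (n : ℕ) (hn : 2 ≤ n) (H : ℝ) (hH : H < 0)
    (r θ α : ℝ → ℝ) (r₀ sStar : ℝ)
    (hsol : IsMonotoneMaximalSolution n H r θ α r₀ sStar)
    (hαend : derivWithin α (Icc 0 sStar) sStar = 0)
    (h1 : 3 * Real.sqrt 2 * H * (1 - 1 / Real.sin r₀) < 1)
    (h2 : 0 ≤ Real.sqrt 2 * ((n : ℝ) - 1) *
        Real.tan ((2 / (2 * (n : ℝ) - 1)) *
          (Real.pi / 4 - H * (1 - 1 / Real.sin r₀) * (3 * Real.sqrt 2 * Real.pi / 4))) + H) :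
    ∀ s ∈ Ioc 0 sStar, α s < -(Real.pi / 4) := by
  obtain ⟨hsS, hr₀, hC1r, hC1θ, hC1α, hsolOn, hr0, hθ0, hα0, hval, hαdot, hθend, hend⟩ := hsol
  have hπ := Real.pi_pos
  have hsq2 : (0:ℝ) < Real.sqrt 2 := Real.sqrt_pos.2 (by norm_num)
  have hsq2sq : Real.sqrt 2 * Real.sqrt 2 = 2 := Real.mul_self_sqrt (by norm_num)
  have hn1 : (1:ℝ) ≤ (n:ℝ) - 1 := by
    have : (2:ℝ) ≤ (n:ℝ) := by exact_mod_cast hn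
    linarith
  have hn2 : (0:ℝ) < 2 * (n:ℝ) - 1 := by linarith
  set I : Set ℝ := Icc 0 sStar with hI
  set J : Set ℝ := Ioo 0 sStar with hJdef
  have hJI : J ⊆ I := Ioo_subset_Icc_self
  have hUD : UniqueDiffOn ℝ I := uniqueDiffOn_Icc hsS
  have h0I : (0:ℝ) ∈ I := left_mem_Icc.2 hsS.le
  have hsI : sStar ∈ I := right_mem_Icc.2 hsS.le
  -- r₀ basic facts
  have hr₀pos : 0 < r₀ := hr₀.1
  have hr₀lt : r₀ < Real.pi / 2 := by
    have h2' : arccot (-H / (2 * (n : ℝ) - 1)) ≤ Real.pi / 2 - 0 := by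
      unfold arccot
      have : (0:ℝ) < -H / (2 * (n:ℝ) - 1) := div_pos (by linarith) hn2
      have := Real.arctan_strictMono (show (0:ℝ) < -H / (2 * (n:ℝ) - 1) from this)
      rw [Real.arctan_zero] at this
      linarith
    have := hr₀.2
    linarith
  have hsinr₀pos : 0 < Real.sin r₀ := Real.sin_pos_of_pos_of_lt_pi hr₀pos (by linarith)
  have hsinr₀lt1 : Real.sin r₀ < 1 := by
    have := Real.strictMonoOn_sin (by constructor <;> [linarith; linarith] :
        r₀ ∈ Icc (-(Real.pi/2)) (Real.pi/2))
      (by constructor <;> [linarith; linarith] : Real.pi/2 ∈ Icc (-(Real.pi/2)) (Real.pi/2))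
      hr₀lt
    rwa [Real.sin_pi_div_two] at this
  set p : ℝ := H * (1 - 1 / Real.sin r₀) with hpdef
  have hp : 0 < p := by
    have : 1 < 1 / Real.sin r₀ := (one_lt_div hsinr₀pos).2 hsinr₀lt1
    exact mul_pos_of_neg_of_neg hH (by linarith)
  -- derivatives as HasDerivAt at interior points
  have hid : ∀ x : ℝ, HasDerivAt (fun s : ℝ => s) 1 x := fun x => hasDerivAt_id x
  have hrD : ∀ x ∈ J, HasDerivAt r (Real.cos (α x)) x := fun x hx =>
    ((hsolOn x hx).2.2.1).hasDerivAt (isOpen_Ioo.mem_nhds hx)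
  have hθD : ∀ x ∈ J, HasDerivAt θ (Real.sin (α x) / Real.sin (r x)) x := fun x hx =>
    ((hsolOn x hx).2.2.2.1).hasDerivAt (isOpen_Ioo.mem_nhds hx)
  have hαD : ∀ x ∈ J, HasDerivAt α (alphaRHS n H (r x) (θ x) (α x)) x := fun x hx =>
    ((hsolOn x hx).2.2.2.2).hasDerivAt (isOpen_Ioo.mem_nhds hx)
  have hαdw : ∀ x ∈ J, derivWithin α I x = alphaRHS n H (r x) (θ x) (α x) := fun x hx =>
    ((hαD x hx).hasDerivWithinAt.derivWithin (hUD x (hJI hx)))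
  -- pointwise sign facts on J
  have hsinr : ∀ x ∈ J, 0 < Real.sin (r x) := fun x hx => by
    have h := (hval x hx).1
    exact Real.sin_pos_of_pos_of_lt_pi h.1 (by have := h.2; linarith)
  have hsinα : ∀ x ∈ J, Real.sin (α x) < 0 := fun x hx => by
    have h := (hval x hx).2.2
    exact Real.sin_neg_of_neg_of_neg_pi_lt h.2 (by have := h.1; linarith)
  have hcosα : ∀ x ∈ J, 0 < Real.cos (α x) := fun x hx => by
    have h := (hval x hx).2.2
    exact Real.cos_pos_of_mem_Ioo ⟨h.1, by have := h.2; linarith⟩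
  -- monotonicity of the three functions
  have hrM : StrictMonoOn r I := by
    apply strictMonoOn_of_deriv_pos (convex_Icc 0 sStar) hC1r.continuousOn
    intro x hx
    rw [interior_Icc] at hx
    rw [(hrD x hx).deriv]
    exact hcosα x hx
  have hθA : StrictAntiOn θ I := by
    apply strictAntiOn_of_deriv_neg (convex_Icc 0 sStar) hC1θ.continuousOn
    intro x hx
    rw [interior_Icc] at hx
    rw [(hθD x hx).deriv]
    exact div_neg_of_neg_of_pos (hsinα x hx) (hsinr x hx)
  have hαM : StrictMonoOn α I := by
    apply strictMonoOn_of_deriv_pos (convex_Icc 0 sStar) hC1α.continuousOn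
    intro x hx
    rw [interior_Icc] at hx
    have := hαdot x hx
    rwa [hαdw x hx, ← (hαD x hx).deriv] at this
  -- limits at sStar within J
  haveI hNB : (nhdsWithin sStar J).NeBot := by
    rw [← mem_closure_iff_nhdsWithin_neBot, hJdef, closure_Ioo hsS.ne]
    exact hsI
  have hlim : ∀ (f : ℝ → ℝ), ContDiffOn ℝ 1 f I →
      Filter.Tendsto f (nhdsWithin sStar J) (nhds (f sStar)) := fun f hf =>
    ((hf.continuousOn sStar hsI).mono hJI)
  -- endpoint bounds by continuity / monotonicity
  have hrstar_le : r sStar ≤ Real.pi / 2 :=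
    le_of_tendsto (hlim r hC1r)
      (Filter.eventually_of_mem self_mem_nhdsWithin fun x hx => ((hval x hx).1.2).le)
  have hαstar_le : α sStar ≤ 0 :=
    le_of_tendsto (hlim α hC1α)
      (Filter.eventually_of_mem self_mem_nhdsWithin fun x hx => ((hval x hx).2.2.2).le)
  have hrstar_gt : r₀ < r sStar := by
    have := hrM h0I hsI hsS
    rwa [hr0] at this
  have hαstar_gt : -(Real.pi/2) < α sStar := by
    have := hαM h0I hsI hsS
    rwa [hα0] at this
  have hθstar_lt : θ sStar < Real.pi / 4 := by
    have := hθA h0I hsI hsS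
    rwa [hθ0] at this
  have hsinrstar : 0 < Real.sin (r sStar) :=
    Real.sin_pos_of_pos_of_lt_pi (lt_trans hr₀pos hrstar_gt) (by linarith)
  have hsinrstar_le1 : Real.sin (r sStar) ≤ 1 := Real.sin_le_one _
  have hsin2θstar : 0 < Real.sin (2 * θ sStar) :=
    Real.sin_pos_of_pos_of_lt_pi (by linarith) (by linarith)
  have hcos2θstar : 0 < Real.cos (2 * θ sStar) :=
    Real.cos_pos_of_mem_Ioo ⟨by linarith, by linarith⟩
  have hsinαstar : Real.sin (α sStar) ≤ 0 :=
    Real.sin_nonpos_of_nonpos_of_neg_pi_le hαstar_le (by linarith)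
  have hcosrstar : 0 ≤ Real.cos (r sStar) :=
    Real.cos_nonneg_of_mem_Icc ⟨by linarith, by linarith⟩
  -- the endpoint identity : alphaRHS = 0 at sStar
  have hkey : alphaRHS n H (r sStar) (θ sStar) (α sStar) = 0 := by
    have hdc : ContinuousOn (derivWithin α I) I :=
      hC1α.continuousOn_derivWithin hUD le_rfl
    have t1 : Filter.Tendsto (derivWithin α I) (nhdsWithin sStar J) (nhds 0) := by
      rw [← hαend]
      exact ((hdc sStar hsI).mono hJI)
    have hFc : Filter.Tendsto (fun s => alphaRHS n H (r s) (θ s) (α s))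
        (nhdsWithin sStar J) (nhds (alphaRHS n H (r sStar) (θ sStar) (α sStar))) := by
      unfold alphaRHS
      have hr' := hlim r hC1r
      have hθ' := hlim θ hC1θ
      have hα' := hlim α hC1α
      have hcs : Filter.Tendsto (fun s => Real.cos (2 * θ s)) (nhdsWithin sStar J)
          (nhds (Real.cos (2 * θ sStar))) :=
        (Real.continuous_cos.tendsto _).comp ((tendsto_const_nhds.mul hθ'))
      have hss : Filter.Tendsto (fun s => Real.sin (2 * θ s)) (nhdsWithin sStar J)
          (nhds (Real.sin (2 * θ sStar))) :=
        (Real.continuous_sin.tendsto _).comp ((tendsto_const_nhds.mul hθ'))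
      have hca : Filter.Tendsto (fun s => Real.cos (α s)) (nhdsWithin sStar J)
          (nhds (Real.cos (α sStar))) := (Real.continuous_cos.tendsto _).comp hα'
      have hsa : Filter.Tendsto (fun s => Real.sin (α s)) (nhdsWithin sStar J)
          (nhds (Real.sin (α sStar))) := (Real.continuous_sin.tendsto _).comp hα'
      have hsr : Filter.Tendsto (fun s => Real.sin (r s)) (nhdsWithin sStar J)
          (nhds (Real.sin (r sStar))) := (Real.continuous_sin.tendsto _).comp hr'
      have hcr : Filter.Tendsto (fun s => Real.cos (r s)) (nhdsWithin sStar J)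
          (nhds (Real.cos (r sStar))) := (Real.continuous_cos.tendsto _).comp hr'
      exact ((((tendsto_const_nhds.mul (hcs.div hss hsin2θstar.ne')).mul hca).div hsr
        hsinrstar.ne').sub ((tendsto_const_nhds.mul (hcr.div hsr hsinrstar.ne')).mul
          hsa)).add tendsto_const_nhds
    have t2 : Filter.Tendsto (derivWithin α I) (nhdsWithin sStar J)
        (nhds (alphaRHS n H (r sStar) (θ sStar) (α sStar))) := by
      apply hFc.congr'
      filter_upwards [eventually_mem_nhdsWithin] with x hx
      exact (hαdw x hx).symm
    exact (tendsto_nhds_unique t2 t1)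
  -- a convenient abbreviation
  set c2 : ℝ := Real.cos (2 * θ sStar) / Real.sin (2 * θ sStar) with hc2def
  have hc2pos : 0 < c2 := div_pos hcos2θstar hsin2θstar
  -- from hkey : the numerator bound K ≤ -H * sin r∗ ≤ -H
  have hKbound : (2 * (n:ℝ) - 2) * c2 * Real.cos (α sStar) ≤ -H * Real.sin (r sStar) := by
    have hkey' : (2 * (n:ℝ) - 2) * c2 * Real.cos (α sStar) / Real.sin (r sStar)
        = (2 * (n:ℝ) - 1) * (Real.cos (r sStar) / Real.sin (r sStar)) * Real.sin (α sStar) - H := by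
      unfold alphaRHS at hkey
      rw [← hc2def] at hkey
      linarith
    have hT2 : (2 * (n:ℝ) - 1) * (Real.cos (r sStar) / Real.sin (r sStar)) * Real.sin (α sStar) ≤ 0 := by
      apply mul_nonpos_of_nonneg_of_nonpos _ hsinαstar
      exact mul_nonneg (by linarith) (div_nonneg hcosrstar hsinrstar.le)
    have := (div_le_iff₀ hsinrstar).1 (by rw [hkey']; linarith :
      (2 * (n:ℝ) - 2) * c2 * Real.cos (α sStar) / Real.sin (r sStar) ≤ -H)
    linarith [this]
  -- now enter the contradiction argument
  intro s hs
  by_contra hcon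
  push_neg at hcon
  have hαsstar : -(Real.pi/4) ≤ α sStar := by
    rcases eq_or_lt_of_le hs.2 with h | h
    · rwa [h] at hcon
    · exact le_trans hcon (hαM ⟨hs.1.le, hs.2⟩ hsI h).le
  have hcosαstar : Real.sqrt 2 / 2 ≤ Real.cos (α sStar) := by
    have := Real.cos_le_cos_of_nonneg_of_le_pi (by linarith : (0:ℝ) ≤ -α sStar)
      (by linarith : Real.pi/4 ≤ Real.pi) (by linarith : -α sStar ≤ Real.pi/4)
    rw [Real.cos_neg, Real.cos_pi_div_four] at this
    linarith
  -- pointwise comparison bound on J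
  have hmain : ∀ x ∈ J, alphaRHS n H (r x) (θ x) (α x)
      ≤ (2 * (n:ℝ) - 1) * (-(Real.sin (α x) / Real.sin (r x))) + p := by
    intro x hx
    obtain ⟨hrx, hθx, hαx⟩ := hval x hx
    have hsrx := hsinr x hx
    have hsax := hsinα x hx
    have hcax := hcosα x hx
    have hθge : θ sStar < θ x := hθA (hJI hx) hsI hx.2
    have hαle : α x < α sStar := hαM (hJI hx) hsI hx.2
    have hrx_ge : r₀ < r x := by
      have := hrM h0I (hJI hx) hx.1
      rwa [hr0] at this
    have hθstarpos : 0 < θ sStar := hθend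
    clear hval hsolOn hαdot hend hαend hid hrD hθD hαD hαdw hNB hlim hrstar_le
      hrstar_gt hαstar_gt hθstar_lt hkey hθ0 hα0 hr0 hrM hθA hαM hsinr hsinα hcosα
      hθend hcon hαsstar hs h1 h2 hC1r hC1θ hC1α hUD hI hJdef hJI h0I hsI hsS hr₀
      hn
    have hsin2θx : 0 < Real.sin (2 * θ x) :=
      Real.sin_pos_of_pos_of_lt_pi (by linarith only [hθx.1]) (by linarith only [hθx.2, hπ])
    have hcos2θx : 0 ≤ Real.cos (2 * θ x) :=
      Real.cos_nonneg_of_mem_Icc ⟨by linarith only [hθx.1, hπ], by linarith only [hθx.2]⟩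
    have hc2x : Real.cos (2 * θ x) / Real.sin (2 * θ x) ≤ c2 := by
      rw [hc2def, div_le_div_iff₀ hsin2θx hsin2θstar]
      have hsub : 0 ≤ Real.sin (2 * θ x - 2 * θ sStar) :=
        Real.sin_nonneg_of_nonneg_of_le_pi (by linarith only [hθge])
          (by linarith only [hθx.2, hθstarpos, hπ])
      rw [Real.sin_sub] at hsub
      linarith only [hsub]
    have hcax_le : Real.cos (α x) ≤ Real.cos (α sStar) := by
      have := Real.cos_le_cos_of_nonneg_of_le_pi (by linarith only [hαstar_le] : (0:ℝ) ≤ -α sStar)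
        (by linarith only [hαx.1, hπ] : -α x ≤ Real.pi) (by linarith only [hαle] : -α sStar ≤ -α x)
      rwa [Real.cos_neg, Real.cos_neg] at this
    have hsinrx_ge : Real.sin r₀ ≤ Real.sin (r x) := by
      have := Real.strictMonoOn_sin
        (⟨by linarith only [hr₀pos, hπ], by linarith only [hr₀lt]⟩ :
          r₀ ∈ Icc (-(Real.pi/2)) (Real.pi/2))
        (⟨by linarith only [hrx.1, hπ], by linarith only [hrx.2]⟩ :
          r x ∈ Icc (-(Real.pi/2)) (Real.pi/2)) hrx_ge
      exact this.le
    -- numerator bound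
    have hnum : (2 * (n:ℝ) - 2) * (Real.cos (2 * θ x) / Real.sin (2 * θ x)) * Real.cos (α x)
        ≤ -H := by
      have step : (2 * (n:ℝ) - 2) * (Real.cos (2 * θ x) / Real.sin (2 * θ x)) * Real.cos (α x)
          ≤ (2 * (n:ℝ) - 2) * c2 * Real.cos (α sStar) := by
        apply mul_le_mul (mul_le_mul_of_nonneg_left hc2x (by linarith only [hn1]))
          hcax_le hcax.le
        exact mul_nonneg (by linarith only [hn1]) hc2pos.le
      linarith only [step, hKbound,
        mul_nonneg (neg_nonneg.2 hH.le) (sub_nonneg.2 hsinrstar_le1)]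
    -- T1 bound
    have hT1 : (2 * (n:ℝ) - 2) * (Real.cos (2 * θ x) / Real.sin (2 * θ x)) * Real.cos (α x)
        / Real.sin (r x) ≤ -H / Real.sin (r x) :=
      (div_le_div_iff_of_pos_right hsrx).2 hnum
    -- (−H)/sin r + H ≤ p
    have hHp : -H / Real.sin (r x) + H ≤ p := by
      have hpH : (0:ℝ) ≤ p - H := by linarith only [hp, hH]
      have h1' : (p - H) * Real.sin r₀ = -H := by
        rw [hpdef]; field_simp; ring
      have key : -H ≤ (p - H) * Real.sin (r x) := by
        have := mul_le_mul_of_nonneg_left hsinrx_ge hpH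
        linarith only [this, h1']
      rw [div_add' _ _ _ hsrx.ne', div_le_iff₀ hsrx]
      nlinarith only [key]
    -- T2 bound
    have hT2 : -((2 * (n:ℝ) - 1) * (Real.cos (r x) / Real.sin (r x)) * Real.sin (α x))
        ≤ (2 * (n:ℝ) - 1) * (-(Real.sin (α x) / Real.sin (r x))) := by
      have e1 : -((2 * (n:ℝ) - 1) * (Real.cos (r x) / Real.sin (r x)) * Real.sin (α x))
          = ((2 * (n:ℝ) - 1) * Real.cos (r x) * (-Real.sin (α x))) / Real.sin (r x) := by
        ring
      have e2 : (2 * (n:ℝ) - 1) * (-(Real.sin (α x) / Real.sin (r x)))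
          = ((2 * (n:ℝ) - 1) * (-Real.sin (α x))) / Real.sin (r x) := by ring
      rw [e1, e2, div_le_div_iff_of_pos_right hsrx]
      nlinarith only [mul_nonneg (mul_nonneg hn2.le (sub_nonneg.2 (Real.cos_le_one (r x))))
        (neg_nonneg.2 hsax.le)]
    unfold alphaRHS
    linarith only [hT1, hT2, hHp]
  -- main integral inequality via monotone comparison
  have hg : (fun s => (2 * (n:ℝ) - 1) * (Real.pi/4 - θ s) + p * s - (α s + Real.pi/2)) 0
      ≤ (fun s => (2 * (n:ℝ) - 1) * (Real.pi/4 - θ s) + p * s - (α s + Real.pi/2)) sStar := by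
    have hmono : MonotoneOn
        (fun s => (2 * (n:ℝ) - 1) * (Real.pi/4 - θ s) + p * s - (α s + Real.pi/2)) I := by
      apply monotoneOn_of_deriv_nonneg (convex_Icc 0 sStar)
      · exact ((continuousOn_const.mul (continuousOn_const.sub hC1θ.continuousOn)).add
          (continuousOn_const.mul continuousOn_id)).sub
          (hC1α.continuousOn.add continuousOn_const)
      · rw [interior_Icc]
        intro x hx
        exact (((((hasDerivAt_const x (Real.pi/4)).sub (hθD x hx)).const_mul
          (2 * (n:ℝ) - 1)).add ((hid x).const_mul p)).sub
          ((hαD x hx).add_const (Real.pi/2))).differentiableAt.differentiableWithinAt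
      · rw [interior_Icc]
        intro x hx
        have hD : HasDerivAt
            (fun s => (2 * (n:ℝ) - 1) * (Real.pi/4 - θ s) + p * s - (α s + Real.pi/2))
            ((2 * (n:ℝ) - 1) * (0 - Real.sin (α x) / Real.sin (r x)) + p * 1
              - alphaRHS n H (r x) (θ x) (α x)) x :=
          ((((hasDerivAt_const x (Real.pi/4)).sub (hθD x hx)).const_mul
            (2 * (n:ℝ) - 1)).add ((hid x).const_mul p)).sub
            ((hαD x hx).add_const (Real.pi/2))
        rw [hD.deriv]
        have := hmain x hx
        linarith only [this]
    exact hmono h0I hsI hsS.le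
  simp only [hθ0, hα0] at hg
  -- find s₁ with α s₁ = -π/4
  have hivt : -(Real.pi/4) ∈ α '' (Icc 0 sStar) := by
    apply intermediate_value_Icc hsS.le hC1α.continuousOn
    rw [hα0]
    exact ⟨by linarith, hαsstar⟩
  obtain ⟨s₁, hs₁I, hs₁⟩ := hivt
  have hs₁pos : 0 < s₁ := by
    rcases eq_or_lt_of_le hs₁I.1 with h | h
    · rw [← h] at hs₁; rw [hα0] at hs₁; linarith
    · exact h
  -- bound s₁ ≤ √2 (π/4 - θ s₁) < √2 π/4
  have hθs₁pos : 0 < θ s₁ := by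
    rcases eq_or_lt_of_le hs₁I.2 with h | h
    · rw [h]; exact hθend
    · exact lt_of_lt_of_le hθend (hθA hs₁I hsI h).le
  have hg1 : s₁ ≤ Real.sqrt 2 * (Real.pi/4 - θ s₁) := by
    have hmono : MonotoneOn (fun s => Real.sqrt 2 * (Real.pi/4 - θ s) - s) (Icc 0 s₁) := by
      apply monotoneOn_of_deriv_nonneg (convex_Icc 0 s₁)
      · exact ((continuousOn_const.mul (continuousOn_const.sub
          (hC1θ.continuousOn.mono (Icc_subset_Icc le_rfl hs₁I.2)))).sub continuousOn_id)
      · rw [interior_Icc]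
        intro x hx
        have hxJ : x ∈ J := ⟨hx.1, lt_of_lt_of_le hx.2 hs₁I.2⟩
        exact ((((hasDerivAt_const x (Real.pi/4)).sub (hθD x hxJ)).const_mul
          (Real.sqrt 2)).sub (hid x)).differentiableAt.differentiableWithinAt
      · rw [interior_Icc]
        intro x hx
        have hxJ : x ∈ J := ⟨hx.1, lt_of_lt_of_le hx.2 hs₁I.2⟩
        have hD : HasDerivAt (fun s => Real.sqrt 2 * (Real.pi/4 - θ s) - s)
            (Real.sqrt 2 * (0 - Real.sin (α x) / Real.sin (r x)) - 1) x :=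
          (((hasDerivAt_const x (Real.pi/4)).sub (hθD x hxJ)).const_mul
            (Real.sqrt 2)).sub (hid x)
        rw [hD.deriv]
        -- need : -sin(α x)/sin(r x) ≥ √2/2
        have hαlt : α x < α s₁ := hαM (hJI hxJ) hs₁I hx.2
        have hsax : Real.sin (α x) ≤ -(Real.sqrt 2 / 2) := by
          have hm := Real.strictMonoOn_sin
            (⟨by linarith only [(hval x hxJ).2.2.1], by linarith only [(hval x hxJ).2.2.2, hπ]⟩ :
              α x ∈ Icc (-(Real.pi/2)) (Real.pi/2))
            (⟨by rw [hs₁]; linarith only [hπ], by rw [hs₁]; linarith only [hπ]⟩ :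
              α s₁ ∈ Icc (-(Real.pi/2)) (Real.pi/2)) hαlt
          rw [hs₁] at hm
          rw [Real.sin_neg, Real.sin_pi_div_four] at hm
          linarith only [hm]
        have hsrx := hsinr x hxJ
        have hsr1 : Real.sin (r x) ≤ 1 := Real.sin_le_one _
        have hkey2 : Real.sqrt 2 / 2 ≤ -(Real.sin (α x) / Real.sin (r x)) := by
          rw [← neg_div, le_div_iff₀ hsrx]
          have h1'' : Real.sqrt 2 / 2 * Real.sin (r x) ≤ Real.sqrt 2 / 2 * 1 :=
            mul_le_mul_of_nonneg_left hsr1 (by positivity)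
          linarith only [h1'', hsax]
        have h2'' := mul_le_mul_of_nonneg_left hkey2 hsq2.le
        have h3'' : Real.sqrt 2 * (Real.sqrt 2 / 2) = 1 := by
          rw [mul_div_assoc']
          rw [hsq2sq]
          norm_num
        linarith only [h2'', h3'']
    have := hmono (left_mem_Icc.2 hs₁pos.le) (right_mem_Icc.2 hs₁pos.le) hs₁pos.le
    simp only [hθ0] at this
    linarith only [this]
  have hs₁lt : s₁ < Real.sqrt 2 * Real.pi / 4 := by
    nlinarith only [hg1, hθs₁pos, hsq2, hπ, mul_pos hsq2 hθs₁pos]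
  -- bound s∗ - s₁ ≤ √2 (r s∗ - r s₁) < √2 π/2
  have hg2 : sStar - s₁ ≤ Real.sqrt 2 * (r sStar - r s₁) := by
    have hmono : MonotoneOn (fun s => Real.sqrt 2 * r s - s) (Icc s₁ sStar) := by
      apply monotoneOn_of_deriv_nonneg (convex_Icc s₁ sStar)
      · exact ((continuousOn_const.mul
          (hC1r.continuousOn.mono (Icc_subset_Icc hs₁I.1 le_rfl))).sub continuousOn_id)
      · rw [interior_Icc]
        intro x hx
        have hxJ : x ∈ J := ⟨lt_trans hs₁pos hx.1, hx.2⟩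
        exact (((hrD x hxJ).const_mul (Real.sqrt 2)).sub
          (hid x)).differentiableAt.differentiableWithinAt
      · rw [interior_Icc]
        intro x hx
        have hxJ : x ∈ J := ⟨lt_trans hs₁pos hx.1, hx.2⟩
        have hD : HasDerivAt (fun s => Real.sqrt 2 * r s - s)
            (Real.sqrt 2 * Real.cos (α x) - 1) x :=
          ((hrD x hxJ).const_mul (Real.sqrt 2)).sub (hid x)
        rw [hD.deriv]
        -- α x > -π/4, so cos α x ≥ √2/2
        have hαgt : α s₁ < α x := hαM hs₁I (hJI hxJ) hx.1
        rw [hs₁] at hαgt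
        have hcax : Real.sqrt 2 / 2 ≤ Real.cos (α x) := by
          have := Real.cos_le_cos_of_nonneg_of_le_pi
            (by linarith only [(hval x hxJ).2.2.2] : (0:ℝ) ≤ -α x)
            (by linarith only [hπ] : Real.pi/4 ≤ Real.pi)
            (by linarith only [hαgt] : -α x ≤ Real.pi/4)
          rw [Real.cos_neg, Real.cos_pi_div_four] at this
          linarith only [this]
        have h2'' := mul_le_mul_of_nonneg_left hcax hsq2.le
        have h3'' : Real.sqrt 2 * (Real.sqrt 2 / 2) = 1 := by
          rw [mul_div_assoc', hsq2sq]; norm_num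
        linarith only [h2'', h3'']
    have hmem : s₁ ∈ Icc s₁ sStar := left_mem_Icc.2 hs₁I.2
    have hmem' : sStar ∈ Icc s₁ sStar := right_mem_Icc.2 hs₁I.2
    have := hmono hmem hmem' hs₁I.2
    simp only at this
    linarith only [this]
  have hrs₁ : r₀ ≤ r s₁ := by
    rcases eq_or_lt_of_le hs₁I.1 with h | h
    · rw [← h, hr0]
    · rw [← hr0]; exact (hrM h0I hs₁I h).le
  have hsstar_lt : sStar < 3 * Real.sqrt 2 * Real.pi / 4 := by
    nlinarith only [hg2, hrstar_le, hrs₁, hr₀pos, hs₁lt, hsq2, hπ, mul_pos hsq2 hr₀pos]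
  -- combine : (2n-1)(π/4 - θ∗) + p·s∗ ≥ α∗ + π/2 ≥ π/4, with strictness via s∗ < 3√2π/4
  have hcomb : Real.pi/4 - p * (3 * Real.sqrt 2 * Real.pi / 4)
      < (2 * (n:ℝ) - 1) * (Real.pi/4 - θ sStar) := by
    have h0 : (2 * (n:ℝ) - 1) * (Real.pi/4 - Real.pi/4) + p * 0 - (-(Real.pi/2) + Real.pi/2)
        ≤ (2 * (n:ℝ) - 1) * (Real.pi/4 - θ sStar) + p * sStar - (α sStar + Real.pi/2) := hg
    have hps : p * sStar < p * (3 * Real.sqrt 2 * Real.pi / 4) :=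
      (mul_lt_mul_iff_right₀ hp).2 hsstar_lt
    linarith only [h0, hps, hαsstar]
  -- tangent comparison
  set A : ℝ := (2 / (2 * (n:ℝ) - 1)) *
    (Real.pi / 4 - H * (1 - 1 / Real.sin r₀) * (3 * Real.sqrt 2 * Real.pi / 4)) with hAdef
  have hApos : 0 < A := by
    rw [hAdef, ← hpdef]
    have hB : 0 < Real.pi/4 - p * (3 * Real.sqrt 2 * Real.pi / 4) := by
      have : p * (3 * Real.sqrt 2 * Real.pi / 4) = (3 * Real.sqrt 2 * p) * (Real.pi / 4) := by
        ring
      rw [this]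
      have h3 : 3 * Real.sqrt 2 * p < 1 := by
        rw [hpdef]; linarith only [h1]
      nlinarith only [h3, hπ]
    positivity
  have hAlt : A < Real.pi/2 - 2 * θ sStar := by
    rw [hAdef, ← hpdef]
    have : (2 / (2 * (n:ℝ) - 1)) * (Real.pi / 4 - p * (3 * Real.sqrt 2 * Real.pi / 4))
        < (2 / (2 * (n:ℝ) - 1)) * ((2 * (n:ℝ) - 1) * (Real.pi/4 - θ sStar)) := by
      apply mul_lt_mul_of_pos_left _ (by positivity)
      convert hcomb using 3
    calc (2 / (2 * (n:ℝ) - 1)) * (Real.pi / 4 - p * (3 * Real.sqrt 2 * Real.pi / 4))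
        < (2 / (2 * (n:ℝ) - 1)) * ((2 * (n:ℝ) - 1) * (Real.pi/4 - θ sStar)) := this
      _ = Real.pi/2 - 2 * θ sStar := by field_simp; ring
  have htan : Real.tan A < c2 := by
    have h1' : Real.tan A < Real.tan (Real.pi/2 - 2 * θ sStar) :=
      Real.tan_lt_tan_of_nonneg_of_lt_pi_div_two hApos.le (by linarith only [hθend]) hAlt
    have h2' : Real.tan (Real.pi/2 - 2 * θ sStar) = c2 := by
      rw [Real.tan_pi_div_two_sub, Real.tan_eq_sin_div_cos, inv_div, hc2def]
    rwa [h2'] at h1'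
  -- final contradiction with hkey
  have hlow : -H < Real.sqrt 2 * ((n:ℝ) - 1) * c2 := by
    have : Real.sqrt 2 * ((n:ℝ) - 1) * Real.tan A < Real.sqrt 2 * ((n:ℝ) - 1) * c2 := by
      apply mul_lt_mul_of_pos_left htan
      positivity
    rw [hAdef] at h2
    linarith only [this, h2]
  -- estimate alphaRHS at sStar from below
  have hT1' : Real.sqrt 2 * ((n:ℝ) - 1) * c2
      ≤ (2 * (n:ℝ) - 2) * c2 * Real.cos (α sStar) / Real.sin (r sStar) := by
    have hnum' : Real.sqrt 2 * ((n:ℝ) - 1) * c2 ≤ (2 * (n:ℝ) - 2) * c2 * Real.cos (α sStar) := by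
      have : (2 * (n:ℝ) - 2) * c2 * (Real.sqrt 2 / 2) ≤ (2 * (n:ℝ) - 2) * c2 * Real.cos (α sStar) := by
        apply mul_le_mul_of_nonneg_left hcosαstar
        exact mul_nonneg (by linarith only [hn1]) hc2pos.le
      nlinarith only [this, hsq2sq]
    calc Real.sqrt 2 * ((n:ℝ) - 1) * c2 ≤ (2 * (n:ℝ) - 2) * c2 * Real.cos (α sStar) := hnum'
      _ ≤ (2 * (n:ℝ) - 2) * c2 * Real.cos (α sStar) / Real.sin (r sStar) := by
          rw [le_div_iff₀ hsinrstar]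
          nlinarith only [hsinrstar_le1, mul_nonneg (mul_nonneg
            (by linarith only [hn1] : (0:ℝ) ≤ 2*(n:ℝ)-2) hc2pos.le)
            (by linarith only [hcosαstar, hsq2] : (0:ℝ) ≤ Real.cos (α sStar))]
  have hT2' : 0 ≤ -((2 * (n:ℝ) - 1) * (Real.cos (r sStar) / Real.sin (r sStar))
      * Real.sin (α sStar)) := by
    have : (2 * (n:ℝ) - 1) * (Real.cos (r sStar) / Real.sin (r sStar)) * Real.sin (α sStar) ≤ 0 :=
      mul_nonpos_of_nonneg_of_nonpos
        (mul_nonneg (by linarith only [hn2]) (div_nonneg hcosrstar hsinrstar.le)) hsinαstar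
    linarith only [this]
  unfold alphaRHS at hkey
  rw [← hc2def] at hkey
  linarith only [hkey, hT1', hT2', hlow]
end
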